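/- arXiv:math/0509327 — 2 statements merged into one kernel-verified Lean document; each statement's English description precedes it below -/
import Mathlib

section
/- Let H be a Hilbert space and M, N closed subspaces. Then H = M⊥ + N⊥ if and only if the Dixmier angle cosine c₀(M, N) < 1, where c₀(M,N) = sup{|⟨x,y⟩| : x ∈ M, y ∈ N, ‖x‖=‖y‖=1}. -/
open ContinuousLinearMap Submodule

noncomputable def dixmierAngle {H : Type*} [NormedAddCommGroup H] [InnerProductSpace ℂ H]
    (M N : Submodule ℂ H) : ℝ :=
  sSup {r : ℝ | ∃ x ∈ M, ∃ y ∈ N, ‖x‖ = 1 ∧ ‖y‖ = 1 ∧ r = ‖(inner ℂ x y : ℂ)‖}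

variable {H : Type*} [NormedAddCommGroup H] [InnerProductSpace ℂ H] [CompleteSpace H]

/-!
If `c₀(M, N) < 1`, then `‖P_M P_N‖ ≤ c₀(M, N) < 1`, so `1 - P_M P_N` is invertible, and every
`(1 - P_M P_N) w = (P_N w - P_M P_N w) + (w - P_N w)` lies in `M⊥ + N⊥`.

Conversely, if `M⊥ + N⊥ = H`, the open mapping theorem writes each `x` as `u + v` with `u ∈ M⊥`,
`v ∈ N⊥` and `‖v‖ ≤ C ‖x‖`. For `x ∈ M` and `y ∈ N` this gives `‖x‖² = ⟪x - y, v⟫ ≤ C ‖x‖ ‖x - y‖`,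
so `x` is at distance at least `‖x‖ / C` from `N`; by Pythagoras `‖P_N x‖² ≤ (1 - C⁻²) ‖x‖²`,
and `|⟪x, y⟫| = |⟪P_N x, y⟫| ≤ √(1 - C⁻²)` for unit vectors.
-/

open scoped InnerProductSpace

section RCLike

variable {𝕜 E : Type*} [RCLike 𝕜] [NormedAddCommGroup E] [InnerProductSpace 𝕜 E]

theorem sup_orthogonal_eq_top_of_norm_starProjection_comp_lt_one [CompleteSpace E]
    (M N : Submodule 𝕜 E) [M.HasOrthogonalProjection] [N.HasOrthogonalProjection]
    (h : ‖M.starProjection ∘L N.starProjection‖ < 1) : Mᗮ ⊔ Nᗮ = ⊤ := by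
  rw [eq_top_iff]
  rintro z -
  obtain ⟨w, rfl⟩ : ∃ w, (1 - M.starProjection ∘L N.starProjection) w = z :=
    ⟨(Units.oneSub _ h)⁻¹.val z, congr($((Units.oneSub _ h).mul_inv) z)⟩
  refine mem_sup.2 ⟨_, M.sub_starProjection_mem_orthogonal (N.starProjection w), _,
    N.sub_starProjection_mem_orthogonal w, ?_⟩
  simp only [sub_apply, comp_apply]
  abel

theorem exists_norm_le_mul_norm_sub_of_sup_orthogonal_eq_top [CompleteSpace E]
    {M N : Submodule 𝕜 E} (h : Mᗮ ⊔ Nᗮ = ⊤) :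
    ∃ C > 0, ∀ x ∈ M, ∀ y ∈ N, ‖x‖ ≤ C * ‖x - y‖ := by
  have hsurj : Function.Surjective (Mᗮ.subtypeL.coprod Nᗮ.subtypeL) := fun z => by
    obtain ⟨u, hu, v, hv, rfl⟩ := mem_sup.1 (h ▸ mem_top : z ∈ Mᗮ ⊔ Nᗮ)
    exact ⟨(⟨u, hu⟩, ⟨v, hv⟩), rfl⟩
  obtain ⟨C, hC, hpre⟩ := exists_preimage_norm_le _ hsurj
  refine ⟨C, hC, fun x hx y hy => ?_⟩
  obtain ⟨⟨u, v⟩, hx_eq, hnorm⟩ := hpre x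
  have hv_eq : x - u = v := sub_eq_of_eq_add' hx_eq.symm
  have hinner : ⟪x - y, (v : E)⟫_𝕜 = ⟪x, x⟫_𝕜 := by
    rw [inner_sub_left, (mem_orthogonal N _).1 v.2 y hy, sub_zero, ← hv_eq, inner_sub_right,
      (mem_orthogonal M _).1 u.2 x hx, sub_zero]
  have hv : ‖(v : E)‖ ≤ C * ‖x‖ := (norm_snd_le (u, v)).trans hnorm
  have hsq : ‖x‖ * ‖x‖ ≤ ‖x‖ * (C * ‖x - y‖) :=
    calc ‖x‖ * ‖x‖ = ‖⟪x - y, (v : E)⟫_𝕜‖ := by rw [hinner, inner_self_eq_norm_sq_to_K]; simp [sq]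
      _ ≤ ‖x - y‖ * (C * ‖x‖) := (norm_inner_le_norm _ _).trans (by gcongr)
      _ = ‖x‖ * (C * ‖x - y‖) := by ring
  rcases (norm_nonneg x).eq_or_lt with hx0 | hx0
  · rw [← hx0]; positivity
  · exact le_of_mul_le_mul_left hsq hx0

theorem norm_starProjection_sq_le_of_norm_le_mul_norm_sub {M N : Submodule 𝕜 E}
    [N.HasOrthogonalProjection] {C : ℝ} (hC : 0 < C)
    (h : ∀ x ∈ M, ∀ y ∈ N, ‖x‖ ≤ C * ‖x - y‖) {x : E} (hx : x ∈ M) :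
    ‖N.starProjection x‖ ^ 2 ≤ (1 - C⁻¹ ^ 2) * ‖x‖ ^ 2 := by
  have hpyth := N.norm_sq_eq_add_norm_sq_starProjection x
  rw [starProjection_orthogonal_val] at hpyth
  have hdist : C⁻¹ * ‖x‖ ≤ ‖x - N.starProjection x‖ := by
    rw [inv_mul_le_iff₀ hC]; exact h x hx _ (N.starProjection_apply_mem x)
  nlinarith [mul_self_le_mul_self (by positivity) hdist]

end RCLike

section Dixmier

variable {E : Type*} [NormedAddCommGroup E] [InnerProductSpace ℂ E]

theorem dixmierAngle_nonneg (M N : Submodule ℂ E) : 0 ≤ dixmierAngle M N :=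
  Real.sSup_nonneg <| by rintro r ⟨x, -, y, -, -, -, rfl⟩; exact norm_nonneg _

theorem dixmierAngle_le {M N : Submodule ℂ E} {c : ℝ} (hc : 0 ≤ c)
    (h : ∀ x ∈ M, ∀ y ∈ N, ‖x‖ = 1 → ‖y‖ = 1 → ‖⟪x, y⟫_ℂ‖ ≤ c) : dixmierAngle M N ≤ c :=
  Real.sSup_le (by rintro r ⟨x, hx, y, hy, hx1, hy1, rfl⟩; exact h x hx y hy hx1 hy1) hc

theorem norm_inner_le_dixmierAngle_mul {M N : Submodule ℂ E} {x y : E} (hx : x ∈ M)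
    (hy : y ∈ N) : ‖⟪x, y⟫_ℂ‖ ≤ dixmierAngle M N * (‖x‖ * ‖y‖) := by
  rcases eq_or_ne x 0 with rfl | hx0
  · simp
  rcases eq_or_ne y 0 with rfl | hy0
  · simp
  have hbdd : BddAbove {r : ℝ | ∃ x ∈ M, ∃ y ∈ N, ‖x‖ = 1 ∧ ‖y‖ = 1 ∧ r = ‖⟪x, y⟫_ℂ‖} := by
    refine ⟨1, ?_⟩
    rintro r ⟨x, -, y, -, hx1, hy1, rfl⟩
    simpa [hx1, hy1] using norm_inner_le_norm (𝕜 := ℂ) x y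
  have hunit : ‖x‖⁻¹ * ‖y‖⁻¹ * ‖⟪x, y⟫_ℂ‖ ≤ dixmierAngle M N := by
    refine le_csSup hbdd ⟨_, M.smul_mem _ hx, _, N.smul_mem _ hy, norm_smul_inv_norm hx0,
      norm_smul_inv_norm hy0, ?_⟩
    simp only [inner_smul_left, inner_smul_right, norm_mul, RCLike.norm_conj, norm_inv,
      norm_algebraMap', norm_norm]
    ring
  calc ‖⟪x, y⟫_ℂ‖ = ‖x‖⁻¹ * ‖y‖⁻¹ * ‖⟪x, y⟫_ℂ‖ * (‖x‖ * ‖y‖) := by field_simp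
    _ ≤ dixmierAngle M N * (‖x‖ * ‖y‖) := by gcongr

theorem norm_starProjection_le_dixmierAngle_mul {M N : Submodule ℂ E} [M.HasOrthogonalProjection]
    {y : E} (hy : y ∈ N) : ‖M.starProjection y‖ ≤ dixmierAngle M N * ‖y‖ := by
  set p := M.starProjection y
  have hsq : ‖p‖ * ‖p‖ ≤ ‖p‖ * (dixmierAngle M N * ‖y‖) :=
    calc ‖p‖ * ‖p‖ = RCLike.re ⟪p, y⟫_ℂ := by
          rw [M.re_inner_starProjection_eq_normSq, sq]; rfl
      _ ≤ ‖⟪p, y⟫_ℂ‖ := RCLike.re_le_norm _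
      _ ≤ dixmierAngle M N * (‖p‖ * ‖y‖) :=
          norm_inner_le_dixmierAngle_mul (M.starProjection_apply_mem y) hy
      _ = ‖p‖ * (dixmierAngle M N * ‖y‖) := by ring
  rcases (norm_nonneg p).eq_or_lt with hp0 | hp0
  · rw [← hp0]; exact mul_nonneg (dixmierAngle_nonneg M N) (norm_nonneg y)
  · exact le_of_mul_le_mul_left hsq hp0

theorem norm_starProjection_comp_le_dixmierAngle (M N : Submodule ℂ E) [M.HasOrthogonalProjection]
    [N.HasOrthogonalProjection] : ‖M.starProjection ∘L N.starProjection‖ ≤ dixmierAngle M N :=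
  opNorm_le_bound _ (dixmierAngle_nonneg M N) fun z =>
    calc ‖M.starProjection (N.starProjection z)‖ ≤ dixmierAngle M N * ‖N.starProjection z‖ :=
          norm_starProjection_le_dixmierAngle_mul (N.starProjection_apply_mem z)
      _ ≤ dixmierAngle M N * ‖z‖ := by
          gcongr
          · exact dixmierAngle_nonneg M N
          · exact N.norm_starProjection_apply_le z

theorem dixmierAngle_lt_one_of_norm_le_mul_norm_sub {M N : Submodule ℂ E}
    [N.HasOrthogonalProjection] {C : ℝ} (hC : 0 < C)
    (h : ∀ x ∈ M, ∀ y ∈ N, ‖x‖ ≤ C * ‖x - y‖) : dixmierAngle M N < 1 := by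
  have hbound : dixmierAngle M N ≤ √(1 - C⁻¹ ^ 2) := by
    refine dixmierAngle_le (Real.sqrt_nonneg _) fun x hx y hy hx1 hy1 => ?_
    have hproj : ⟪x, y⟫_ℂ = ⟪N.starProjection x, y⟫_ℂ := by
      rw [N.inner_starProjection_left_eq_right, N.starProjection_eq_self_iff.2 hy]
    have hPx : ‖N.starProjection x‖ ≤ √(1 - C⁻¹ ^ 2) := by
      refine Real.le_sqrt_of_sq_le ?_
      simpa [hx1] using norm_starProjection_sq_le_of_norm_le_mul_norm_sub hC h hx
    calc ‖⟪x, y⟫_ℂ‖ ≤ ‖N.starProjection x‖ * ‖y‖ := hproj ▸ norm_inner_le_norm _ _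
      _ ≤ √(1 - C⁻¹ ^ 2) := by rwa [hy1, mul_one]
  refine hbound.trans_lt ((Real.sqrt_lt' one_pos).2 ?_)
  have : 0 < C⁻¹ ^ 2 := by positivity
  linarith

end Dixmier

theorem sup_orthogonal_eq_top_iff_dixmierAngle_lt_one (M N : Submodule ℂ H)
    (hM : IsClosed (M : Set H)) (hN : IsClosed (N : Set H)) :
    Mᗮ ⊔ Nᗮ = (⊤ : Submodule ℂ H) ↔ dixmierAngle M N < 1 := by
  have : CompleteSpace M := hM.completeSpace_coe
  have : CompleteSpace N := hN.completeSpace_coe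
  refine ⟨fun h => ?_, fun h => ?_⟩
  · obtain ⟨C, hC, hMN⟩ := exists_norm_le_mul_norm_sub_of_sup_orthogonal_eq_top h
    exact dixmierAngle_lt_one_of_norm_le_mul_norm_sub hC hMN
  · exact sup_orthogonal_eq_top_of_norm_starProjection_comp_lt_one M N
      ((norm_starProjection_comp_le_dixmierAngle M N).trans_lt h)
end

section
/- Let A : H1 → H2 be (S,T)-weakly complementable. Then R(A) ∩ T ⊆ R(A/(S,T)) ⊆ closure(R(A)) ∩ T and R(A*) ∩ S ⊆ R((A/(S,T))*) ⊆ closure(R(A*)) ∩ S. In particular, if R(A) is closed, then R(A/(S,T)) = R(A) ∩ T and R((A/(S,T))*) = R(A*) ∩ S. -/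
open ContinuousLinearMap Submodule

noncomputable def projC {H : Type*} [NormedAddCommGroup H] [InnerProductSpace ℂ H]
    [CompleteSpace H] (S : Submodule ℂ H) [CompleteSpace S] : H →L[ℂ] H :=
  S.subtypeL ∘L orthogonalProjection S

variable {H₁ H₂ : Type*} [NormedAddCommGroup H₁] [InnerProductSpace ℂ H₁] [CompleteSpace H₁]
  [NormedAddCommGroup H₂] [InnerProductSpace ℂ H₂] [CompleteSpace H₂]

noncomputable def blk11 (S : Submodule ℂ H₁) [CompleteSpace S]
    (T : Submodule ℂ H₂) [CompleteSpace T] (A : H₁ →L[ℂ] H₂) : H₁ →L[ℂ] H₂ :=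
  projC T ∘L A ∘L projC S

noncomputable def blk12 (S : Submodule ℂ H₁) [CompleteSpace S]
    (T : Submodule ℂ H₂) [CompleteSpace T] (A : H₁ →L[ℂ] H₂) : H₁ →L[ℂ] H₂ :=
  projC T ∘L A ∘L (1 - projC S)

noncomputable def blk21 (S : Submodule ℂ H₁) [CompleteSpace S]
    (T : Submodule ℂ H₂) [CompleteSpace T] (A : H₁ →L[ℂ] H₂) : H₁ →L[ℂ] H₂ :=
  (1 - projC T) ∘L A ∘L projC S

noncomputable def blk22 (S : Submodule ℂ H₁) [CompleteSpace S]
    (T : Submodule ℂ H₂) [CompleteSpace T] (A : H₁ →L[ℂ] H₂) : H₁ →L[ℂ] H₂ :=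
  (1 - projC T) ∘L A ∘L (1 - projC S)

/-- `As` is the bilateral shorted operator `A/(S,T)`: there are `Bh = |A22|^(1/2)`,
`Dh = |A22*|^(1/2)` (unique positive fourth roots of `A22* A22` resp. `A22 A22*`),
`U` the partial isometry of the polar decomposition of `A22`, and `E`, `F` the reduced
Douglas solutions of `A21 = |A22*|^(1/2) U X` and `A12* = |A22|^(1/2) X`, with
`As = A11 - F* E`. -/
def IsShorted (S : Submodule ℂ H₁) [CompleteSpace S] (T : Submodule ℂ H₂) [CompleteSpace T]
    (A As : H₁ →L[ℂ] H₂) : Prop :=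
  ∃ (Bh : H₁ →L[ℂ] H₁) (Dh : H₂ →L[ℂ] H₂) (U : H₁ →L[ℂ] H₂) (E : H₁ →L[ℂ] H₁)
      (F : H₂ →L[ℂ] H₁),
    Bh.IsPositive ∧
    Bh ∘L Bh ∘L Bh ∘L Bh = adjoint (blk22 S T A) ∘L blk22 S T A ∧
    Dh.IsPositive ∧
    Dh ∘L Dh ∘L Dh ∘L Dh = blk22 S T A ∘L adjoint (blk22 S T A) ∧
    blk22 S T A = U ∘L (Bh ∘L Bh) ∧
    (∀ x, blk22 S T A x = 0 → U x = 0) ∧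
    (Dh ∘L U) ∘L E = blk21 S T A ∧
    LinearMap.range (E : H₁ →ₗ[ℂ] H₁) ≤ (LinearMap.ker (Dh ∘L U : H₁ →ₗ[ℂ] H₂))ᗮ ∧
    Bh ∘L F = adjoint (blk12 S T A) ∧
    LinearMap.range (F : H₂ →ₗ[ℂ] H₁) ≤ (LinearMap.ker (Bh : H₁ →ₗ[ℂ] H₁))ᗮ ∧
    As = blk11 S T A - adjoint F ∘L E

/-!
Write `B = A22 = U Bh²` with `Bh = |B|^{1/2}` and `Dh = |B*|^{1/2}`. The partial isometry `U`
satisfies `U* U = 1` on `(ker Bh)ᗮ`, and uniqueness of positive square roots gives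
`Dh U = U Bh`; hence `A21 = U Bh E` and `A12 = F* Bh`.

If `A x ∈ T`, the `Tᗮ`-component `U Bh (E x + Bh x)` of `A x` vanishes, so `E x + Bh x ∈ ker Bh`,
which `F*` kills, and `As x = A11 x + A12 x = A x`. Conversely `As x = A (P_S x) - L (E x)` with
`L = F* + U Bh`; since `L Bh = A (1 - P_S)` and `E x ∈ (ker Bh)ᗮ = closure R(Bh)`, this lies in
the closure of `R(A)`, and it lies in `T` because `F` vanishes on `Tᗮ`.

The data `(Dh, Bh, U*, U F, U E)` exhibits `As*` as the shorted operator of `A*` for `(T, S)`,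
which yields the statements about adjoints; when `R(A)` is closed, so is `R(A*)`.
-/

open scoped InnerProductSpace

section OperatorFacts

variable {E F : Type*} [NormedAddCommGroup E] [InnerProductSpace ℂ E]
  [NormedAddCommGroup F] [InnerProductSpace ℂ F]

lemma ContinuousLinearMap.eq_zero_of_mem_ker_of_mem_orthogonal_ker {X : E →L[ℂ] F} {x : E}
    (hx : X x = 0) (hx' : x ∈ X.kerᗮ) : x = 0 := by
  simpa [X.ker.inf_orthogonal_eq_bot] using
    Submodule.mem_inf.mpr ⟨LinearMap.mem_ker.mpr hx, hx'⟩

variable [CompleteSpace E] [CompleteSpace F]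

lemma ContinuousLinearMap.range_le_orthogonal_ker_adjoint (X : E →L[ℂ] F) :
    X.range ≤ (adjoint X).kerᗮ := by
  rw [orthogonal_ker, adjoint_adjoint]
  exact Submodule.le_topologicalClosure _

lemma ContinuousLinearMap.le_ker_adjoint_of_range_le_orthogonal {X : E →L[ℂ] F}
    {K : Submodule ℂ F} (h : X.range ≤ Kᗮ) : K ≤ (adjoint X).ker :=
  K.le_orthogonal_orthogonal.trans (X.orthogonal_range ▸ Submodule.orthogonal_le h)

lemma IsSelfAdjoint.ker_comp_self {s : E →L[ℂ] E} (hs : IsSelfAdjoint s) :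
    (s ∘L s).ker = s.ker := by
  simpa [hs.adjoint_eq] using s.ker_adjoint_comp_self

lemma IsSelfAdjoint.range_le_orthogonal_ker {s : E →L[ℂ] E} (hs : IsSelfAdjoint s) :
    s.range ≤ s.kerᗮ := by
  simpa [hs.adjoint_eq] using s.range_le_orthogonal_ker_adjoint

lemma IsSelfAdjoint.isPositive_comp_self {s : E →L[ℂ] E} (hs : IsSelfAdjoint s) :
    (s ∘L s).IsPositive := by
  simpa [hs.adjoint_eq] using isPositive_adjoint_comp_self s

lemma ContinuousLinearMap.isClosed_range_adjoint {X : E →L[ℂ] F}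
    (hX : IsClosed (X.range : Set F)) : IsClosed ((adjoint X).range : Set E) := by
  set K := X.range
  have : CompleteSpace K := hX.completeSpace_coe
  obtain ⟨C, hC, hpre⟩ :=
    X.rangeRestrict.exists_preimage_norm_le (by rintro ⟨_, x, rfl⟩; exact ⟨x, rfl⟩)
  have hbound : ∀ z : K, ‖z‖ ≤ C * ‖adjoint X z‖ := by
    intro z
    obtain ⟨x, hx, hxn⟩ := hpre z
    have hsq : ‖z‖ ^ 2 ≤ ‖adjoint X z‖ * (C * ‖z‖) :=
      calc ‖z‖ ^ 2 = RCLike.re ⟪adjoint X z, x⟫_ℂ := by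
            rw [adjoint_inner_left, ← inner_self_eq_norm_sq (𝕜 := ℂ)]
            exact congr(RCLike.re ⟪(z : F), ($hx).1⟫_ℂ).symm
        _ ≤ ‖adjoint X z‖ * ‖x‖ := re_inner_le_norm _ _
        _ ≤ ‖adjoint X z‖ * (C * ‖z‖) := by gcongr
    rcases (norm_nonneg z).eq_or_lt with h0 | hpos
    · rw [← h0]; positivity
    · nlinarith
  have hrange : ((adjoint X).range : Set E) = Set.range (adjoint X ∘L K.subtypeL) := by
    refine Set.Subset.antisymm ?_ (by rintro _ ⟨z, rfl⟩; exact ⟨z, rfl⟩)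
    rintro _ ⟨y, rfl⟩
    have hy : adjoint X (y - K.starProjection y) = 0 :=
      LinearMap.mem_ker.mp (X.orthogonal_range ▸ K.sub_starProjection_mem_orthogonal y)
    rw [map_sub, sub_eq_zero] at hy
    exact ⟨K.orthogonalProjectionOnto y, hy.symm⟩
  rw [hrange]
  exact ((adjoint X ∘L K.subtypeL).antilipschitz_of_bound (K := ⟨C, hC.le⟩) hbound).isClosed_range
    (adjoint X ∘L K.subtypeL).uniformContinuous

end OperatorFacts

/-- `Bh = |B|^{1/2}`, `Dh = |B*|^{1/2}`, and `U` the partial isometry in `B = U |B|`. -/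
structure IsPolarFactorization (B : H₁ →L[ℂ] H₂) (Bh : H₁ →L[ℂ] H₁) (Dh : H₂ →L[ℂ] H₂)
    (U : H₁ →L[ℂ] H₂) : Prop where
  isPositive_left : Bh.IsPositive
  left_pow_four : Bh ∘L Bh ∘L Bh ∘L Bh = adjoint B ∘L B
  isPositive_right : Dh.IsPositive
  right_pow_four : Dh ∘L Dh ∘L Dh ∘L Dh = B ∘L adjoint B
  eq_comp : B = U ∘L (Bh ∘L Bh)
  ker_le_ker : ∀ x, B x = 0 → U x = 0

namespace IsPolarFactorization

variable {B : H₁ →L[ℂ] H₂} {Bh : H₁ →L[ℂ] H₁} {Dh : H₂ →L[ℂ] H₂} {U : H₁ →L[ℂ] H₂}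

lemma adjoint_left (h : IsPolarFactorization B Bh Dh U) : adjoint Bh = Bh :=
  h.isPositive_left.isSelfAdjoint.adjoint_eq

lemma adjoint_left_sq (h : IsPolarFactorization B Bh Dh U) :
    adjoint (Bh ∘L Bh) = Bh ∘L Bh := by
  rw [adjoint_comp, h.adjoint_left]

lemma ker_left_sq (h : IsPolarFactorization B Bh Dh U) : (Bh ∘L Bh).ker = Bh.ker :=
  h.isPositive_left.isSelfAdjoint.ker_comp_self

lemma ker_left (h : IsPolarFactorization B Bh Dh U) : Bh.ker = B.ker := by
  rw [← B.ker_adjoint_comp_self, ← h.left_pow_four, ← h.ker_left_sq,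
    ← (isSelfAdjoint_iff'.mpr h.adjoint_left_sq).ker_comp_self]
  rfl

lemma ker_left_le (h : IsPolarFactorization B Bh Dh U) : Bh.ker ≤ U.ker :=
  fun x hx => h.ker_le_ker x (by rwa [h.ker_left] at hx)

lemma range_adjoint_le (h : IsPolarFactorization B Bh Dh U) : (adjoint U).range ≤ Bh.kerᗮ :=
  (adjoint U).range_le_orthogonal_ker_adjoint.trans <| by
    rw [adjoint_adjoint]; exact Submodule.orthogonal_le h.ker_left_le

lemma adjoint_eq (h : IsPolarFactorization B Bh Dh U) : adjoint B = (Bh ∘L Bh) ∘L adjoint U := by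
  rw [h.eq_comp, adjoint_comp, h.adjoint_left_sq]

lemma adjoint_apply_apply_of_mem (h : IsPolarFactorization B Bh Dh U) {z : H₁} (hz : z ∈ Bh.kerᗮ) :
    adjoint U (U z) = z := by
  have sq_injOn : ∀ a ∈ Bh.kerᗮ, ∀ b ∈ Bh.kerᗮ, Bh (Bh a) = Bh (Bh b) → a = b := by
    intro a ha b hb hab
    rw [← h.ker_left_sq] at ha hb
    exact sub_eq_zero.mp <| eq_zero_of_mem_ker_of_mem_orthogonal_ker
      (X := Bh ∘L Bh) (by simpa [sub_eq_zero] using hab) (Submodule.sub_mem _ ha hb)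
  have hsq : adjoint U ∘L U ∘L (Bh ∘L Bh) = Bh ∘L Bh := by
    ext x
    refine sq_injOn _ (h.range_adjoint_le ⟨_, rfl⟩)
      _ (h.isPositive_left.isSelfAdjoint.range_le_orthogonal_ker ⟨_, rfl⟩) ?_
    have := congr($(h.left_pow_four) x)
    rw [h.adjoint_eq, h.eq_comp] at this
    simpa using this.symm
  refine sq_injOn _ (h.range_adjoint_le ⟨_, rfl⟩) _ hz ?_
  have := congr($(congr(ContinuousLinearMap.adjoint $hsq)) z)
  simpa [adjoint_comp, h.adjoint_left] using this

lemma adjoint_comp_comp_left (h : IsPolarFactorization B Bh Dh U) :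
    adjoint U ∘L U ∘L Bh = Bh := by
  ext x
  exact h.adjoint_apply_apply_of_mem
    (h.isPositive_left.isSelfAdjoint.range_le_orthogonal_ker ⟨x, rfl⟩)

lemma left_comp_adjoint_comp (h : IsPolarFactorization B Bh Dh U) :
    Bh ∘L adjoint U ∘L U = Bh := by
  simpa [adjoint_comp, h.adjoint_left, comp_assoc] using
    congr(ContinuousLinearMap.adjoint $(h.adjoint_comp_comp_left))

/-- Both `Dh` and `U Bh U*` are positive square roots of `U Bh² U*`, which is itself the positive
square root of `B B*`. -/
lemma right_comp_eq (h : IsPolarFactorization B Bh Dh U) : Dh ∘L U = U ∘L Bh := by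
  have hBUU : ∀ x, Bh (adjoint U (U x)) = Bh x := fun x => congr($(h.left_comp_adjoint_comp) x)
  have hDh := h.isPositive_right
  have hsq : Dh ∘L Dh = U ∘L (Bh ∘L Bh) ∘L adjoint U := by
    refine (CFC.mul_self_eq_mul_self_iff _ _
      ((nonneg_iff_isPositive _).mpr hDh.isSelfAdjoint.isPositive_comp_self)
      ((nonneg_iff_isPositive _).mpr
        (h.isPositive_left.isSelfAdjoint.isPositive_comp_self.conj_adjoint U))).mp ?_
    ext x
    have := congr($(h.right_pow_four) x)
    rw [h.adjoint_eq, h.eq_comp] at this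
    simpa [hBUU] using this
  have hDh_eq : Dh = U ∘L Bh ∘L adjoint U := by
    refine (CFC.mul_self_eq_mul_self_iff _ _ ((nonneg_iff_isPositive _).mpr hDh)
      ((nonneg_iff_isPositive _).mpr (h.isPositive_left.conj_adjoint U))).mp ?_
    ext x
    simpa [hBUU] using congr($hsq x)
  rw [hDh_eq, comp_assoc, comp_assoc, h.left_comp_adjoint_comp]

lemma adjoint (h : IsPolarFactorization B Bh Dh U) :
    IsPolarFactorization (adjoint B) Dh Bh (adjoint U) where
  isPositive_left := h.isPositive_right
  left_pow_four := by rw [adjoint_adjoint]; exact h.right_pow_four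
  isPositive_right := h.isPositive_left
  right_pow_four := by rw [adjoint_adjoint]; exact h.left_pow_four
  eq_comp := by
    have hDDU : Dh ∘L Dh ∘L U = B := by
      rw [h.eq_comp, h.right_comp_eq, ← comp_assoc, h.right_comp_eq, comp_assoc]
    rw [← hDDU, ← comp_assoc, adjoint_comp, adjoint_comp,
      h.isPositive_right.isSelfAdjoint.adjoint_eq]
  ker_le_ker x hx := by
    refine eq_zero_of_mem_ker_of_mem_orthogonal_ker (X := Bh ∘L Bh) ?_
      (h.ker_left_sq ▸ h.range_adjoint_le ⟨x, rfl⟩)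
    simpa [h.adjoint_eq] using hx

lemma range_le_orthogonal_ker_right (h : IsPolarFactorization B Bh Dh U) :
    U.range ≤ Dh.kerᗮ := by
  simpa using h.adjoint.range_adjoint_le

lemma apply_left_eq_zero_iff (h : IsPolarFactorization B Bh Dh U) {z : H₁} :
    U (Bh z) = 0 ↔ Bh z = 0 := by
  refine ⟨fun hz => ?_, fun hz => by rw [hz, map_zero]⟩
  simpa [hz] using (congr($(h.adjoint_comp_comp_left) z)).symm

lemma ker_right_comp (h : IsPolarFactorization B Bh Dh U) : (Dh ∘L U).ker = Bh.ker := by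
  ext z
  simpa [h.right_comp_eq] using h.apply_left_eq_zero_iff

end IsPolarFactorization

section Blocks

variable (S : Submodule ℂ H₁) [CompleteSpace S] (T : Submodule ℂ H₂) [CompleteSpace T]
  (A : H₁ →L[ℂ] H₂)

lemma adjoint_projC : adjoint (projC S) = projC S :=
  (isSelfAdjoint_starProjection S).adjoint_eq

lemma adjoint_one_sub_projC : adjoint (1 - projC S) = 1 - projC S := by
  rw [map_sub, adjoint_projC, one_def, adjoint_id]

lemma adjoint_blk11 : adjoint (blk11 S T A) = blk11 T S (adjoint A) := by
  rw [blk11, blk11, adjoint_comp, adjoint_comp, adjoint_projC, adjoint_projC, comp_assoc]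

lemma adjoint_blk12 : adjoint (blk12 S T A) = blk21 T S (adjoint A) := by
  rw [blk12, blk21, adjoint_comp, adjoint_comp, adjoint_projC, adjoint_one_sub_projC, comp_assoc]

lemma adjoint_blk21 : adjoint (blk21 S T A) = blk12 T S (adjoint A) := by
  rw [blk12, blk21, adjoint_comp, adjoint_comp, adjoint_projC, adjoint_one_sub_projC, comp_assoc]

lemma adjoint_blk22 : adjoint (blk22 S T A) = blk22 T S (adjoint A) := by
  rw [blk22, blk22, adjoint_comp, adjoint_comp, adjoint_one_sub_projC, adjoint_one_sub_projC,
    comp_assoc]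

lemma blk11_add_blk12 : blk11 S T A + blk12 S T A = projC T ∘L A := by
  ext x; simp [blk11, blk12]

lemma blk21_add_blk22 : blk21 S T A + blk22 S T A = (1 - projC T) ∘L A := by
  ext x; simp [blk21, blk22]

lemma blk11_add_blk21 : blk11 S T A + blk21 S T A = A ∘L projC S := by
  ext x; simp [blk11, blk21]

lemma blk12_add_blk22 : blk12 S T A + blk22 S T A = A ∘L (1 - projC S) := by
  ext x
  simp only [blk12, blk22, comp_sub, sub_comp, add_apply, sub_apply, comp_apply, one_apply_eq_self]
  abel

end Blocks

namespace IsShorted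

variable {S : Submodule ℂ H₁} [CompleteSpace S] {T : Submodule ℂ H₂} [CompleteSpace T]
  {A As : H₁ →L[ℂ] H₂}

lemma exists_polar_blocks (hAs : IsShorted S T A As) :
    ∃ (Bh : H₁ →L[ℂ] H₁) (Dh : H₂ →L[ℂ] H₂) (U : H₁ →L[ℂ] H₂) (E : H₁ →L[ℂ] H₁)
      (F : H₂ →L[ℂ] H₁), IsPolarFactorization (blk22 S T A) Bh Dh U ∧
      blk21 S T A = U ∘L Bh ∘L E ∧ E.range ≤ Bh.kerᗮ ∧
      blk12 S T A = adjoint F ∘L Bh ∧ F.range ≤ Bh.kerᗮ ∧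
      As = blk11 S T A - adjoint F ∘L E := by
  obtain ⟨Bh, Dh, U, E, F, hBp, hB4, hDp, hD4, hPol, hU0, hE, hErange, hF, hFrange, rfl⟩ := hAs
  have hP : IsPolarFactorization (blk22 S T A) Bh Dh U := ⟨hBp, hB4, hDp, hD4, hPol, hU0⟩
  refine ⟨Bh, Dh, U, E, F, hP, ?_, hP.ker_right_comp ▸ hErange, ?_, hFrange, rfl⟩
  · rw [← hE, hP.right_comp_eq, comp_assoc]
  · rw [← adjoint_adjoint (blk12 S T A), ← hF, adjoint_comp, hP.adjoint_left]

lemma range_inf_le_range (hAs : IsShorted S T A As) : A.range ⊓ T ≤ As.range := by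
  obtain ⟨Bh, Dh, U, E, F, hP, h21, -, h12, hFrange, rfl⟩ := hAs.exists_polar_blocks
  rintro _ ⟨⟨x, rfl⟩, hxT⟩
  have hAx : projC T (A x) = A x := Submodule.starProjection_eq_self_iff.mpr hxT
  have hBh : Bh (E x + Bh x) = 0 := by
    refine hP.apply_left_eq_zero_iff.mp ?_
    simpa [h21, hP.eq_comp, hAx] using congr($(blk21_add_blk22 S T A) x)
  have hF0 : adjoint F (E x) = - adjoint F (Bh x) := by
    rw [eq_neg_iff_add_eq_zero, ← map_add]
    exact le_ker_adjoint_of_range_le_orthogonal hFrange hBh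
  refine ⟨x, ?_⟩
  calc blk11 S T A x - adjoint F (E x) = blk11 S T A x + blk12 S T A x := by
        rw [hF0, h12, sub_neg_eq_add, comp_apply]
    _ = A x := by rw [← add_apply, blk11_add_blk12, comp_apply, hAx]

lemma range_le_topologicalClosure (hAs : IsShorted S T A As) :
    As.range ≤ A.range.topologicalClosure := by
  obtain ⟨Bh, Dh, U, E, F, hP, h21, hErange, h12, -, rfl⟩ := hAs.exists_polar_blocks
  set L := adjoint F + U ∘L Bh
  have hLBh : L ∘L Bh = A ∘L (1 - projC S) := by
    rw [← blk12_add_blk22 S T, h12, hP.eq_comp, add_comp, comp_assoc]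
  rintro _ ⟨x, rfl⟩
  have hEx : E x ∈ Bh.range.topologicalClosure := by
    simpa [Bh.orthogonal_ker, hP.adjoint_left] using hErange ⟨x, rfl⟩
  have hLEx : L (E x) ∈ A.range.topologicalClosure := by
    refine Submodule.topologicalClosure_mono ?_
      (Submodule.topologicalClosure_map L _ ⟨E x, hEx, rfl⟩)
    rintro _ ⟨_, ⟨v, rfl⟩, rfl⟩
    exact ⟨(1 - projC S) v, by simpa using congr($hLBh v).symm⟩
  have hAsx : (blk11 S T A - adjoint F ∘L E) x = A (projC S x) - L (E x) := by
    rw [← comp_apply A, ← blk11_add_blk21 S T, h21]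
    simp [L]
  change (blk11 S T A - adjoint F ∘L E) x ∈ _
  rw [hAsx]
  exact sub_mem (Submodule.le_topologicalClosure _ ⟨_, rfl⟩) hLEx

lemma range_le (hAs : IsShorted S T A As) : As.range ≤ T := by
  obtain ⟨Bh, _, _, E, F, hP, -, -, h12, hFrange, rfl⟩ := hAs.exists_polar_blocks
  have hFT : Tᗮ ≤ F.ker := fun u hu => by
    refine eq_zero_of_mem_ker_of_mem_orthogonal_ker (X := Bh) ?_ (hFrange ⟨u, rfl⟩)
    have hTu : projC T u = 0 := (Submodule.starProjection_apply_eq_zero_iff T).mpr hu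
    simpa [adjoint_comp, hP.adjoint_left, adjoint_blk12, blk21, hTu] using
      congr($(congr(ContinuousLinearMap.adjoint $h12)) u).symm
  have hFT' : (adjoint F).range ≤ T := by
    refine ((adjoint F).range_le_orthogonal_ker_adjoint.trans ?_).trans_eq T.orthogonal_orthogonal
    exact Submodule.orthogonal_le (by simpa using hFT)
  rintro _ ⟨x, rfl⟩
  exact sub_mem (Submodule.starProjection_apply_mem T _) (hFT' ⟨E x, rfl⟩)

lemma adjoint (hAs : IsShorted S T A As) : IsShorted T S (adjoint A) (adjoint As) := by
  obtain ⟨Bh, Dh, U, E, F, hBp, hB4, hDp, hD4, hPol, hU0, hE, -, hF, hFrange, rfl⟩ := hAs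
  have hP : IsPolarFactorization (blk22 S T A) Bh Dh U := ⟨hBp, hB4, hDp, hD4, hPol, hU0⟩
  have hP' := hP.adjoint
  rw [adjoint_blk22] at hP'
  have hUUF : adjoint U ∘L U ∘L F = F := by
    ext w
    exact hP.adjoint_apply_apply_of_mem (hFrange ⟨w, rfl⟩)
  refine ⟨Dh, Bh, adjoint U, U ∘L F, U ∘L E, hP'.1, hP'.2, hP'.3, hP'.4, hP'.5, hP'.6,
    ?_, ?_, ?_, ?_, ?_⟩
  · rw [← adjoint_blk12, ← hF, comp_assoc, hUUF]
  · rw [hP'.ker_right_comp]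
    rintro _ ⟨w, rfl⟩
    exact hP.range_le_orthogonal_ker_right ⟨F w, rfl⟩
  · rw [← adjoint_blk21, adjoint_adjoint, ← hE, comp_assoc]
  · rintro _ ⟨w, rfl⟩
    exact hP.range_le_orthogonal_ker_right ⟨E w, rfl⟩
  · rw [map_sub, adjoint_blk11, adjoint_comp, adjoint_comp, adjoint_adjoint, comp_assoc, hUUF]

lemma range_eq_inf_of_isClosed (hAs : IsShorted S T A As) (hA : IsClosed (A.range : Set H₂)) :
    As.range = A.range ⊓ T :=
  le_antisymm
    (le_inf (hAs.range_le_topologicalClosure.trans_eq hA.submodule_topologicalClosure_eq)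
      hAs.range_le)
    hAs.range_inf_le_range

end IsShorted

theorem range_shorted_weak
    (S : Submodule ℂ H₁) [CompleteSpace S] (T : Submodule ℂ H₂) [CompleteSpace T]
    (A As : H₁ →L[ℂ] H₂) (hAs : IsShorted S T A As) :
    (LinearMap.range (A : H₁ →ₗ[ℂ] H₂) ⊓ T ≤ LinearMap.range (As : H₁ →ₗ[ℂ] H₂) ∧
      LinearMap.range (As : H₁ →ₗ[ℂ] H₂) ≤ (LinearMap.range (A : H₁ →ₗ[ℂ] H₂)).topologicalClosure ⊓ T) ∧
    (LinearMap.range (adjoint A : H₂ →ₗ[ℂ] H₁) ⊓ S ≤ LinearMap.range (adjoint As : H₂ →ₗ[ℂ] H₁) ∧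
      LinearMap.range (adjoint As : H₂ →ₗ[ℂ] H₁) ≤ (LinearMap.range (adjoint A : H₂ →ₗ[ℂ] H₁)).topologicalClosure ⊓ S) ∧
    (IsClosed ((LinearMap.range (A : H₁ →ₗ[ℂ] H₂) : Submodule ℂ H₂) : Set H₂) →
      LinearMap.range (As : H₁ →ₗ[ℂ] H₂) = LinearMap.range (A : H₁ →ₗ[ℂ] H₂) ⊓ T ∧
      LinearMap.range (adjoint As : H₂ →ₗ[ℂ] H₁) = LinearMap.range (adjoint A : H₂ →ₗ[ℂ] H₁) ⊓ S) := by
  have hAs' := hAs.adjoint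
  exact ⟨⟨hAs.range_inf_le_range, le_inf hAs.range_le_topologicalClosure hAs.range_le⟩,
    ⟨hAs'.range_inf_le_range, le_inf hAs'.range_le_topologicalClosure hAs'.range_le⟩,
    fun hA => ⟨hAs.range_eq_inf_of_isClosed hA,
      hAs'.range_eq_inf_of_isClosed (isClosed_range_adjoint hA)⟩⟩
end
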